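/- Untangling: let E be a comparator network on n channels and F a generalized comparator network on n channels such that the concatenation E;F is a generalized sorting network. Then there exists a (standard) comparator network F' on n channels with the same depth as F such that E;F' is a sorting network. -/

import Mathlib

namespace SN

open scoped Classical

/-- A comparator on `n` channels: a pair of channels. -/
abbrev Comp (n : ℕ) := Fin n × Fin n

/-- A layer is a finite set of comparators. -/
abbrev Layer (n : ℕ) := Finset (Comp n)

/-- A comparator network is a sequence (list) of layers; its depth is the length. -/
abbrev Net (n : ℕ) := List (Layer n)

/-- Each channel is used by at most one comparator of the layer. -/
def NoOverlap {n : ℕ} (L : Layer n) : Prop :=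
  ∀ c ∈ L, ∀ c' ∈ L, c ≠ c' →
    c.1 ≠ c'.1 ∧ c.1 ≠ c'.2 ∧ c.2 ≠ c'.1 ∧ c.2 ≠ c'.2

/-- A (standard) layer: comparators `(i,j)` with `i < j`, channels pairwise disjoint. -/
def IsLayer {n : ℕ} (L : Layer n) : Prop :=
  (∀ c ∈ L, c.1 < c.2) ∧ NoOverlap L

/-- A generalized layer: comparators `(i,j)` with `i ≠ j` allowed in any order. -/
def IsGenLayer {n : ℕ} (L : Layer n) : Prop :=
  (∀ c ∈ L, c.1 ≠ c.2) ∧ NoOverlap L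

def IsNet {n : ℕ} (C : Net n) : Prop := ∀ L ∈ C, IsLayer L

def IsGenNet {n : ℕ} (C : Net n) : Prop := ∀ L ∈ C, IsGenLayer L

/-- Apply one layer to a Boolean vector: a comparator `(i,j)` puts the min
(`&&`) on channel `i` and the max (`||`) on channel `j`. -/
noncomputable def applyLayer {n : ℕ} (L : Layer n) (x : Fin n → Bool) : Fin n → Bool :=
  fun k =>
    if h1 : ∃ c ∈ L, c.1 = k then x h1.choose.1 && x h1.choose.2
    else if h2 : ∃ c ∈ L, c.2 = k then x h2.choose.1 || x h2.choose.2
    else x k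

/-- Run a comparator network on a Boolean input (layers applied in sequence). -/
noncomputable def run {n : ℕ} (C : Net n) (x : Fin n → Bool) : Fin n → Bool :=
  C.foldl (fun y L => applyLayer L y) x

/-- Ascendingly sorted Boolean vector. -/
def BSorted {n : ℕ} (x : Fin n → Bool) : Prop :=
  ∀ i j : Fin n, i ≤ j → x i ≤ x j

/-- A sorting network: a comparator network sorting every Boolean input. -/
def IsSortingNet {n : ℕ} (C : Net n) : Prop :=
  IsNet C ∧ ∀ x : Fin n → Bool, BSorted (run C x)

/-- The set of outputs of a network on all Boolean inputs. -/
def outputs {n : ℕ} (C : Net n) : Set (Fin n → Bool) := Set.range (run C)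

/-- Apply one layer to a vector of naturals. -/
noncomputable def applyLayerN {n : ℕ} (L : Layer n) (x : Fin n → ℕ) : Fin n → ℕ :=
  fun k =>
    if h1 : ∃ c ∈ L, c.1 = k then min (x h1.choose.1) (x h1.choose.2)
    else if h2 : ∃ c ∈ L, c.2 = k then max (x h2.choose.1) (x h2.choose.2)
    else x k

noncomputable def runN {n : ℕ} (C : Net n) (x : Fin n → ℕ) : Fin n → ℕ :=
  C.foldl (fun y L => applyLayerN L y) x

def NSorted {n : ℕ} (x : Fin n → ℕ) : Prop :=
  ∀ i j : Fin n, i ≤ j → x i ≤ x j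

/-- Permute the coordinates of a Boolean vector by `π` (channel `k`'s value
moves to channel `π k`). -/
def permVec {n : ℕ} (π : Equiv.Perm (Fin n)) (x : Fin n → Bool) : Fin n → Bool :=
  fun i => x (π.symm i)

/-- The image of a set of Boolean vectors under coordinate permutation by `π`. -/
def permSet {n : ℕ} (π : Equiv.Perm (Fin n)) (X : Set (Fin n → Bool)) :
    Set (Fin n → Bool) :=
  permVec π '' X

/-- The image `π(L)` of a layer under a permutation of channels. -/
def permLayer {n : ℕ} (π : Equiv.Perm (Fin n)) (L : Layer n) : Layer n :=
  L.image fun c => (π c.1, π c.2)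

/-- Channel `i` is used by some comparator of the layer `L`. -/
def usedIn {n : ℕ} (L : Layer n) (i : Fin n) : Prop := ∃ c ∈ L, c.1 = i ∨ c.2 = i

/-- Channels `i` and `j` are joined by a comparator of `L`. -/
def Joined {n : ℕ} (L : Layer n) (i j : Fin n) : Prop := (i, j) ∈ L ∨ (j, i) ∈ L

/-- `i` is the smaller channel of some comparator of `L` (a min-channel). -/
def MinChan {n : ℕ} (L : Layer n) (i : Fin n) : Prop := ∃ c ∈ L, c.1 = i

/-- `i` is the larger channel of some comparator of `L` (a max-channel). -/
def MaxChan {n : ℕ} (L : Layer n) (i : Fin n) : Prop := ∃ c ∈ L, c.2 = i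

/-- A two-layer network `[L1, L2]` is redundant if some comparator can be removed
so that the outputs of the result are a permutation of the original outputs. -/
def Redundant {n : ℕ} (L1 L2 : Layer n) : Prop :=
  ∃ π : Equiv.Perm (Fin n),
    (∃ c ∈ L1, outputs [L1.erase c, L2] = permSet π (outputs [L1, L2])) ∨
    (∃ c ∈ L2, outputs [L1, L2.erase c] = permSet π (outputs [L1, L2]))

/-- A two-layer network `[L1, L2]` is saturated if it is non-redundant and no
comparator on two channels unused in the second layer can be added to the second
layer so as to make the output set a proper subset of a permutation of the
original output set. -/
def Saturated {n : ℕ} (L1 L2 : Layer n) : Prop :=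
  ¬ Redundant L1 L2 ∧
  ¬ ∃ (c : Comp n) (π : Equiv.Perm (Fin n)),
      c.1 < c.2 ∧ ¬ usedIn L2 c.1 ∧ ¬ usedIn L2 c.2 ∧
      outputs [L1, insert c L2] ⊂ permSet π (outputs [L1, L2])

/-- Vertices of the graph representation of `C`: the comparators of `C`,
tagged with the index of the layer containing them. -/
def Vertex {n : ℕ} (C : Net n) := {p : ℕ × Comp n // p.2 ∈ C.getD p.1 ∅}

/-- The channel carrying the min output (`b = false`, label 1) or max output
(`b = true`, label 2) of a comparator. -/
def outChan {n : ℕ} (c : Comp n) (b : Bool) : Fin n := if b then c.2 else c.1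

/-- An edge with label `b` (1 for min, 2 for max) from comparator `u` to
comparator `v`: the corresponding output of `u` is an input of `v`, i.e. `v`
is the next comparator on that channel. -/
def Edge {n : ℕ} (C : Net n) (b : Bool) (u v : ℕ × Comp n) : Prop :=
  u.1 < v.1 ∧ (outChan u.2 b = v.2.1 ∨ outChan u.2 b = v.2.2) ∧
  ∀ m, u.1 < m → m < v.1 → ¬ usedIn (C.getD m ∅) (outChan u.2 b)

/-- The graph representations of `C` and `D` are isomorphic: a bijection of
comparators preserving the labeled edges. -/
def GraphIso {n m : ℕ} (C : Net n) (D : Net m) : Prop :=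
  ∃ f : Vertex C ≃ Vertex D,
    ∀ (b : Bool) (u v : Vertex C),
      Edge C b u.val v.val ↔ Edge D b (f u).val (f v).val

/-- The graph representation of `C` is connected. -/
def GraphConnected {n : ℕ} (C : Net n) : Prop :=
  ∀ u v : Vertex C,
    Relation.ReflTransGen
      (fun a b : Vertex C => ∃ ℓ : Bool, Edge C ℓ a.val b.val ∨ Edge C ℓ b.val a.val) u v

/-- Reflection of a comparator: `(i,j) ↦ (n-j+1, n-i+1)` (in 1-based terms). -/
def reflectComp {n : ℕ} (c : Comp n) : Comp n := (c.2.rev, c.1.rev)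

def reflectLayer {n : ℕ} (L : Layer n) : Layer n := L.image reflectComp

/-- Reflection `C^R` of a comparator network. -/
def reflect {n : ℕ} (C : Net n) : Net n := C.map reflectLayer

/-- The first layer `F_n = {(2i-1, 2i) : 1 ≤ i ≤ ⌊n/2⌋}` (0-indexed: `(2i, 2i+1)`). -/
def FLayer (n : ℕ) : Layer n :=
  Finset.univ.filter fun c : Comp n => c.1.val % 2 = 0 ∧ c.2.val = c.1.val + 1

/-- The two-layer networks with first layer `F_n`, parametrized by second layer. -/
def SecondLayers (n : ℕ) := {L : Layer n // IsLayer L}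

/-- The number `|R(G_n)|` of equivalence classes of two-layer networks with
first layer `F_n`, under graph isomorphism `≈`. -/
noncomputable def numClasses (n : ℕ) : ℕ :=
  Nat.card (Quot fun L L' : SecondLayers n =>
    GraphIso ([FLayer n, L.val] : Net n) ([FLayer n, L'.val] : Net n))

/-- Redundant two-layer networks with first layer `F_n`. -/
def RedLayers (n : ℕ) := {L : Layer n // IsLayer L ∧ Redundant (FLayer n) L}

/-- The number of equivalence classes of redundant two-layer networks with
first layer `F_n`, under graph isomorphism `≈`. -/
noncomputable def numRedClasses (n : ℕ) : ℕ :=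
  Nat.card (Quot fun L L' : RedLayers n =>
    GraphIso ([FLayer n, L.val] : Net n) ([FLayer n, L'.val] : Net n))

/-! A generalized comparator `(i, j)` with `i > j` acts as the standard comparator `(j, i)`
followed by exchanging channels `i` and `j`. Pushing these exchanges through the remaining
layers (which only relabels their channels) turns `F` into a standard network `F'` of the same
depth with `run F = π ∘ run F'` for a permutation `π` of the channels. Standard networks fix
sorted inputs, so `π` maps every sorted 0-1 vector to a sorted one; testing this on the
threshold vectors shows that `π⁻¹` is monotone, hence `π = 1` and `E;F'` sorts. -/

section Untangling

variable {n : ℕ}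

lemma NoOverlap.eq_of_mem {L : Layer n} (hL : NoOverlap L) {c d : Comp n} (hc : c ∈ L)
    (hd : d ∈ L) (h : c.1 = d.1 ∨ c.1 = d.2 ∨ c.2 = d.1 ∨ c.2 = d.2) : c = d := by
  by_contra hne
  have := hL c hc d hd hne
  tauto

lemma NoOverlap.mono {L L' : Layer n} (hL : NoOverlap L) (h : L' ⊆ L) : NoOverlap L' :=
  fun c hc d hd => hL c (h hc) d (h hd)

lemma IsLayer.isGenLayer {L : Layer n} (hL : IsLayer L) : IsGenLayer L :=
  ⟨fun c hc => (hL.1 c hc).ne, hL.2⟩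

lemma IsNet.append {C D : Net n} (hC : IsNet C) (hD : IsNet D) : IsNet (C ++ D) := by
  intro L hL
  rcases List.mem_append.1 hL with h | h
  exacts [hC L h, hD L h]

lemma applyLayer_fst {L : Layer n} (hL : NoOverlap L) {a b : Fin n} (hab : (a, b) ∈ L)
    (x : Fin n → Bool) : applyLayer L x a = (x a && x b) := by
  have h : ∃ c ∈ L, c.1 = a := ⟨(a, b), hab, rfl⟩
  have hc : h.choose = (a, b) := hL.eq_of_mem h.choose_spec.1 hab (.inl h.choose_spec.2)
  rw [applyLayer, dif_pos h, hc]

lemma applyLayer_snd {L : Layer n} (hL : IsGenLayer L) {a b : Fin n} (hab : (a, b) ∈ L)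
    (x : Fin n → Bool) : applyLayer L x b = (x a || x b) := by
  have h1 : ¬ ∃ c ∈ L, c.1 = b := by
    rintro ⟨c, hc, hcb⟩
    obtain rfl := hL.2.eq_of_mem hc hab (.inr (.inl hcb))
    exact hL.1 _ hc hcb
  have h2 : ∃ c ∈ L, c.2 = b := ⟨(a, b), hab, rfl⟩
  have hc : h2.choose = (a, b) :=
    hL.2.eq_of_mem h2.choose_spec.1 hab (.inr (.inr (.inr h2.choose_spec.2)))
  rw [applyLayer, dif_neg h1, dif_pos h2, hc]

lemma applyLayer_of_not_usedIn {L : Layer n} {k : Fin n} (hk : ¬ usedIn L k)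
    (x : Fin n → Bool) : applyLayer L x k = x k := by
  have h1 : ¬ ∃ c ∈ L, c.1 = k := fun ⟨c, hc, h⟩ => hk ⟨c, hc, .inl h⟩
  have h2 : ¬ ∃ c ∈ L, c.2 = k := fun ⟨c, hc, h⟩ => hk ⟨c, hc, .inr h⟩
  rw [applyLayer, dif_neg h1, dif_neg h2]

lemma run_cons (L : Layer n) (C : Net n) (x : Fin n → Bool) :
    run (L :: C) x = run C (applyLayer L x) := rfl

lemma run_append (C D : Net n) (x : Fin n → Bool) : run (C ++ D) x = run D (run C x) :=
  List.foldl_append ..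

lemma applyLayer_of_bsorted {L : Layer n} (hL : IsLayer L) {x : Fin n → Bool}
    (hx : BSorted x) : applyLayer L x = x := by
  funext k
  by_cases hk : usedIn L k
  · obtain ⟨⟨a, b⟩, hab, rfl | rfl⟩ := hk <;> have hle := hx a b (hL.1 _ hab).le
    · rw [applyLayer_fst hL.2 hab]
      revert hle; cases x a <;> cases x b <;> decide
    · rw [applyLayer_snd hL.isGenLayer hab]
      revert hle; cases x a <;> cases x b <;> decide
  · exact applyLayer_of_not_usedIn hk x

lemma run_of_bsorted {C : Net n} (hC : IsNet C) {x : Fin n → Bool} (hx : BSorted x) :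
    run C x = x := by
  induction C with
  | nil => rfl
  | cons L C ih =>
    rw [run_cons, applyLayer_of_bsorted (hC L List.mem_cons_self) hx]
    exact ih fun M hM => hC M (List.mem_cons_of_mem _ hM)

lemma permVec_permVec (π σ : Equiv.Perm (Fin n)) (x : Fin n → Bool) :
    permVec π (permVec σ x) = permVec (π * σ) x := rfl

lemma mem_permLayer {π : Equiv.Perm (Fin n)} {L : Layer n} {c : Comp n} (hc : c ∈ L) :
    (π c.1, π c.2) ∈ permLayer π L :=
  Finset.mem_image_of_mem _ hc

lemma usedIn_of_usedIn_permLayer {π : Equiv.Perm (Fin n)} {L : Layer n} {k : Fin n}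
    (h : usedIn (permLayer π L) (π k)) : usedIn L k := by
  obtain ⟨_, hc', hk⟩ := h
  obtain ⟨c, hc, rfl⟩ := Finset.mem_image.1 hc'
  exact ⟨c, hc, hk.imp (fun h => π.injective h) (fun h => π.injective h)⟩

lemma IsGenLayer.permLayer {L : Layer n} (hL : IsGenLayer L) (π : Equiv.Perm (Fin n)) :
    IsGenLayer (permLayer π L) := by
  refine ⟨?_, ?_⟩
  · rintro _ hc' h
    obtain ⟨c, hc, rfl⟩ := Finset.mem_image.1 hc'
    exact hL.1 c hc (π.injective h)
  · rintro _ hc' _ hd' hne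
    obtain ⟨c, hc, rfl⟩ := Finset.mem_image.1 hc'
    obtain ⟨d, hd, rfl⟩ := Finset.mem_image.1 hd'
    have := hL.2 c hc d hd (by rintro rfl; exact hne rfl)
    simp only [ne_eq, π.injective.eq_iff]
    exact this

lemma applyLayer_permVec {L : Layer n} (hL : IsGenLayer L) (π : Equiv.Perm (Fin n))
    (x : Fin n → Bool) :
    applyLayer L (permVec π x) = permVec π (applyLayer (permLayer π.symm L) x) := by
  have hM := hL.permLayer π.symm
  funext k
  show _ = applyLayer (permLayer π.symm L) x (π.symm k)
  by_cases hk : usedIn L k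
  · obtain ⟨⟨a, b⟩, hab, rfl | rfl⟩ := hk
    · rw [applyLayer_fst hL.2 hab, applyLayer_fst hM.2 (mem_permLayer hab)]; rfl
    · rw [applyLayer_snd hL hab, applyLayer_snd hM (mem_permLayer hab)]; rfl
  · rw [applyLayer_of_not_usedIn hk,
      applyLayer_of_not_usedIn (fun h => hk (usedIn_of_usedIn_permLayer h))]
    rfl

/-- The other channel of the comparator of `L` using `k`, or `k` itself if `k` is unused. -/
noncomputable def partner (L : Layer n) (k : Fin n) : Fin n :=
  if h : usedIn L k then if h.choose.1 = k then h.choose.2 else h.choose.1 else k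

lemma partner_of_mem {L : Layer n} (hL : NoOverlap L) {a b : Fin n} (hab : (a, b) ∈ L) :
    partner L a = b ∧ partner L b = a := by
  have ha : usedIn L a := ⟨_, hab, .inl rfl⟩
  have hb : usedIn L b := ⟨_, hab, .inr rfl⟩
  have hca : ha.choose = (a, b) := by
    obtain ⟨hc, h⟩ := ha.choose_spec
    exact hL.eq_of_mem hc hab (by tauto)
  have hcb : hb.choose = (a, b) := by
    obtain ⟨hc, h⟩ := hb.choose_spec
    exact hL.eq_of_mem hc hab (by tauto)
  refine ⟨?_, ?_⟩
  · rw [partner, dif_pos ha, hca, if_pos rfl]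
  · rw [partner, dif_pos hb, hcb]
    split_ifs with h
    exacts [h.symm, rfl]

lemma partner_of_not_usedIn {L : Layer n} {k : Fin n} (hk : ¬ usedIn L k) :
    partner L k = k :=
  dif_neg hk

lemma partner_involutive {L : Layer n} (hL : NoOverlap L) : Function.Involutive (partner L) := by
  intro k
  by_cases hk : usedIn L k
  · obtain ⟨⟨a, b⟩, hab, rfl | rfl⟩ := hk <;> simp only [partner_of_mem hL hab]
  · rw [partner_of_not_usedIn hk, partner_of_not_usedIn hk]

def stdLayer (L : Layer n) : Layer n :=
  L.image fun c => if c.1 < c.2 then c else c.swap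

lemma mem_stdLayer_of_lt {L : Layer n} {a b : Fin n} (hab : (a, b) ∈ L) (h : a < b) :
    (a, b) ∈ stdLayer L :=
  Finset.mem_image.2 ⟨_, hab, if_pos h⟩

lemma mem_stdLayer_of_gt {L : Layer n} {a b : Fin n} (hab : (a, b) ∈ L) (h : b < a) :
    (b, a) ∈ stdLayer L :=
  Finset.mem_image.2 ⟨_, hab, if_neg h.not_gt⟩

lemma usedIn_of_usedIn_stdLayer {L : Layer n} {k : Fin n} (h : usedIn (stdLayer L) k) :
    usedIn L k := by
  obtain ⟨_, hc', hk⟩ := h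
  obtain ⟨c, hc, rfl⟩ := Finset.mem_image.1 hc'
  refine ⟨c, hc, ?_⟩
  split_ifs at hk
  exacts [hk, hk.symm]

lemma IsGenLayer.isLayer_stdLayer {L : Layer n} (hL : IsGenLayer L) : IsLayer (stdLayer L) := by
  refine ⟨?_, ?_⟩
  · rintro _ hc'
    obtain ⟨c, hc, rfl⟩ := Finset.mem_image.1 hc'
    split_ifs with h
    · exact h
    · exact lt_of_le_of_ne (not_lt.1 h) (hL.1 c hc).symm
  · rintro _ hc' _ hd' hne
    obtain ⟨c, hc, rfl⟩ := Finset.mem_image.1 hc'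
    obtain ⟨d, hd, rfl⟩ := Finset.mem_image.1 hd'
    have := hL.2 c hc d hd (by rintro rfl; exact hne rfl)
    split_ifs <;> tauto

/-- The permutation exchanging the two channels of every downward comparator of `L` turns the
output of `stdLayer L` into that of `L`. -/
lemma IsGenLayer.exists_applyLayer_eq_permVec_stdLayer {L : Layer n} (hL : IsGenLayer L) :
    ∃ σ : Equiv.Perm (Fin n), ∀ x, applyLayer L x = permVec σ (applyLayer (stdLayer L) x) := by
  set R := L.filter fun c => c.2 < c.1
  have hR : NoOverlap R := hL.2.mono (Finset.filter_subset _ _)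
  have hfix : ∀ {a b}, (a, b) ∈ L → a < b → partner R a = a ∧ partner R b = b := by
    intro a b hab h
    have hunused : ∀ k, k = a ∨ k = b → ¬ usedIn R k := by
      rintro k hk ⟨c, hc, hck⟩
      obtain ⟨hcL, hlt⟩ := Finset.mem_filter.1 hc
      obtain rfl := hL.2.eq_of_mem hcL hab (by rcases hk with rfl | rfl <;> tauto)
      exact h.not_gt hlt
    exact ⟨partner_of_not_usedIn (hunused a (.inl rfl)),
      partner_of_not_usedIn (hunused b (.inr rfl))⟩
  have hswap : ∀ {a b}, (a, b) ∈ L → b < a → partner R a = b ∧ partner R b = a :=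
    fun hab h => partner_of_mem hR (Finset.mem_filter.2 ⟨hab, h⟩)
  have hS := hL.isLayer_stdLayer
  refine ⟨(partner_involutive hR).toPerm _, fun x => funext fun k => ?_⟩
  show _ = applyLayer (stdLayer L) x (partner R k)
  by_cases hk : usedIn L k
  · obtain ⟨⟨a, b⟩, hab, rfl | rfl⟩ := hk <;> rcases (hL.1 _ hab).lt_or_gt with h | h
    · rw [(hfix hab h).1, applyLayer_fst hL.2 hab, applyLayer_fst hS.2 (mem_stdLayer_of_lt hab h)]
    · rw [(hswap hab h).1, applyLayer_fst hL.2 hab, applyLayer_fst hS.2 (mem_stdLayer_of_gt hab h),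
        Bool.and_comm]
    · rw [(hfix hab h).2, applyLayer_snd hL hab,
        applyLayer_snd hS.isGenLayer (mem_stdLayer_of_lt hab h)]
    · rw [(hswap hab h).2, applyLayer_snd hL hab,
        applyLayer_snd hS.isGenLayer (mem_stdLayer_of_gt hab h), Bool.or_comm]
  · have hkR : ¬ usedIn R k := fun ⟨c, hc, h⟩ => hk ⟨c, (Finset.mem_filter.1 hc).1, h⟩
    rw [partner_of_not_usedIn hkR, applyLayer_of_not_usedIn hk,
      applyLayer_of_not_usedIn (fun h => hk (usedIn_of_usedIn_stdLayer h))]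

lemma IsGenNet.exists_isNet_run_permVec {F : Net n} (hF : IsGenNet F) (π : Equiv.Perm (Fin n)) :
    ∃ F' : Net n, ∃ π' : Equiv.Perm (Fin n), IsNet F' ∧ F'.length = F.length ∧
      ∀ x, run F (permVec π x) = permVec π' (run F' x) := by
  induction F generalizing π with
  | nil => exact ⟨[], π, fun _ h => absurd h List.not_mem_nil, rfl, fun _ => rfl⟩
  | cons L F ih =>
    have hL : IsGenLayer (permLayer π.symm L) := (hF L List.mem_cons_self).permLayer π.symm
    obtain ⟨σ, hσ⟩ := hL.exists_applyLayer_eq_permVec_stdLayer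
    obtain ⟨F', π', hF', hlen, hrun⟩ :=
      ih (fun M hM => hF M (List.mem_cons_of_mem _ hM)) (π * σ)
    refine ⟨stdLayer (permLayer π.symm L) :: F', π', ?_, by simp [hlen], fun x => ?_⟩
    · rintro M hM
      rcases List.mem_cons.1 hM with rfl | hM
      exacts [hL.isLayer_stdLayer, hF' M hM]
    · rw [run_cons, run_cons, applyLayer_permVec (hF L List.mem_cons_self), hσ,
        permVec_permVec, hrun]

lemma eq_one_of_forall_bsorted_permVec {π : Equiv.Perm (Fin n)}
    (h : ∀ x, BSorted x → BSorted (permVec π x)) : π = 1 := by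
  have hmono : Monotone π.symm := by
    intro i i' hii'
    have hthreshold : BSorted fun t => decide (π.symm i ≤ t) := fun a b hab => by
      simpa only [Bool.le_iff_imp, decide_eq_true_eq] using fun ha => ha.trans hab
    simpa [permVec, Bool.le_iff_imp] using h _ hthreshold i i' hii'
  rw [← inv_eq_one, Equiv.Perm.inv_def, ← Equiv.Perm.monotone_iff]
  exact hmono

end Untangling

/-- untangling: if `E` is a comparator network and `F` a
generalized comparator network such that `E;F` sorts all Boolean inputs, then
there is a standard comparator network `F'` of the same depth as `F` such that
`E;F'` is a sorting network. -/
theorem untangling {n : ℕ} (E F : Net n) (hE : IsNet E) (hF : IsGenNet F)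
    (hsort : ∀ x : Fin n → Bool, BSorted (run (E ++ F) x)) :
    ∃ F' : Net n, F'.length = F.length ∧ IsSortingNet (E ++ F') := by
  obtain ⟨F', π, hF', hlen, hrun⟩ := hF.exists_isNet_run_permVec 1
  have hEF' : IsNet (E ++ F') := hE.append hF'
  have hpermuted : ∀ x, run (E ++ F) x = permVec π (run (E ++ F') x) := fun x => by
    rw [run_append, run_append, ← hrun]; rfl
  have hπ : π = 1 := eq_one_of_forall_bsorted_permVec fun x hx => by
    simpa [hpermuted, run_of_bsorted hEF' hx] using hsort x
  refine ⟨F', hlen, hEF', fun x => ?_⟩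
  have h := hsort x
  rwa [hpermuted, hπ] at h

end SN
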